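/- Let β_{j,k} be real numbers with Σ_k β_{j,k}² ≤ A²·2^{-2js} for all j ≥ 0. Then for any χ > 0, Σ_{j=0}^{∞} Σ_{k=0}^{2^j−1} min{β_{j,k}², A²χ} ≤ C · A² · χ^{2s/(2s+1)} for a constant C depending only on s, provided χ ≤ 1. -/

import Mathlib

/-- Bias–variance balancing bound for wavelet thresholding: if
`∑_{k<2^j} β_{j,k}² ≤ A² 2^{-2js}` for all `j`, then for every `0 < χ ≤ 1`,
`∑_j ∑_{k<2^j} min(β_{j,k}², A²χ) ≤ C A² χ^{2s/(2s+1)}` with `C` depending only on `s`. -/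
theorem stmt_1 (s : ℝ) (hs : 0 < s) :
    ∃ C : ℝ, 0 < C ∧ ∀ (A : ℝ), 0 < A → ∀ (β : ℕ → ℕ → ℝ),
      (∀ j : ℕ, ∑ k ∈ Finset.range (2 ^ j), (β j k) ^ 2 ≤
        A ^ 2 * (2 : ℝ) ^ (-(2 * (j : ℝ) * s))) →
      ∀ χ : ℝ, 0 < χ → χ ≤ 1 →
        ∑' j : ℕ, ∑ k ∈ Finset.range (2 ^ j), min ((β j k) ^ 2) (A ^ 2 * χ) ≤
          C * A ^ 2 * χ ^ (2 * s / (2 * s + 1)) := by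
  set t : ℝ := 2 * s with ht
  have ht0 : 0 < t := by positivity
  set r : ℝ := (2:ℝ) ^ (-t) with hr
  have hr0 : 0 < r := Real.rpow_pos_of_pos two_pos _
  have hr1 : r < 1 := by
    rw [hr]
    exact Real.rpow_lt_one_of_one_lt_of_neg one_lt_two (by linarith)
  have hr1' : 0 < 1 - r := by linarith
  refine ⟨2 + (1 - r)⁻¹, by positivity, ?_⟩
  intro A hA β hβ χ hχ0 hχ1
  set f : ℕ → ℝ := fun j => ∑ k ∈ Finset.range (2 ^ j), min ((β j k) ^ 2) (A ^ 2 * χ)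
    with hf
  have hfnn : ∀ j, 0 ≤ f j := fun j =>
    Finset.sum_nonneg fun k _ => le_min (sq_nonneg _) (by positivity)
  have hfA : ∀ j, f j ≤ A ^ 2 * r ^ j := by
    intro j
    have h1 : f j ≤ ∑ k ∈ Finset.range (2 ^ j), (β j k) ^ 2 :=
      Finset.sum_le_sum fun k _ => min_le_left _ _
    have h2 : A ^ 2 * (2:ℝ) ^ (-(2 * (j : ℝ) * s)) = A ^ 2 * r ^ j := by
      rw [hr, ← Real.rpow_natCast ((2:ℝ) ^ (-t)) j, ← Real.rpow_mul (by norm_num)]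
      rw [ht]
      ring_nf
    calc f j ≤ ∑ k ∈ Finset.range (2 ^ j), (β j k) ^ 2 := h1
      _ ≤ A ^ 2 * (2:ℝ) ^ (-(2 * (j : ℝ) * s)) := hβ j
      _ = A ^ 2 * r ^ j := h2
  have hfB : ∀ j, f j ≤ 2 ^ j * (A ^ 2 * χ) := by
    intro j
    calc f j ≤ ∑ _k ∈ Finset.range (2 ^ j), A ^ 2 * χ :=
        Finset.sum_le_sum fun k _ => min_le_right _ _
      _ = 2 ^ j * (A ^ 2 * χ) := by
        rw [Finset.sum_const, Finset.card_range, nsmul_eq_mul]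
        push_cast; ring
  have hsum : Summable f :=
    Summable.of_nonneg_of_le hfnn hfA ((summable_geometric_of_lt_one hr0.le hr1).mul_left _)
  set y : ℝ := χ ^ (-(1 / (t + 1))) with hy
  have hy0 : 0 < y := Real.rpow_pos_of_pos hχ0 _
  have hy1 : 1 ≤ y := Real.one_le_rpow_of_pos_of_le_one_of_nonpos hχ0 hχ1
    (by rw [neg_nonpos]; positivity)
  set N : ℕ := ⌈Real.logb 2 y⌉₊ with hN
  have hlog0 : 0 ≤ Real.logb 2 y := Real.logb_nonneg one_lt_two hy1
  have h2N_ge : y ≤ (2:ℝ) ^ (N : ℝ) := by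
    calc y = (2:ℝ) ^ Real.logb 2 y := (Real.rpow_logb two_pos (by norm_num) hy0).symm
      _ ≤ (2:ℝ) ^ (N : ℝ) :=
        Real.rpow_le_rpow_of_exponent_le one_le_two (Nat.le_ceil _)
  have h2N_le : (2:ℝ) ^ (N : ℝ) ≤ 2 * y := by
    have hlt : (N : ℝ) ≤ Real.logb 2 y + 1 := by
      have := Nat.ceil_lt_add_one hlog0
      exact le_of_lt this
    calc (2:ℝ) ^ (N : ℝ) ≤ (2:ℝ) ^ (Real.logb 2 y + 1) :=
        Real.rpow_le_rpow_of_exponent_le one_le_two hlt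
      _ = 2 * y := by
        rw [Real.rpow_add two_pos, Real.rpow_logb two_pos (by norm_num) hy0,
          Real.rpow_one]; ring
  -- the target quantity
  set X : ℝ := χ ^ (t / (t + 1)) with hX
  have hyχ : y * χ = X := by
    rw [hy, hX]
    nth_rewrite 2 [show χ = χ ^ (1:ℝ) by rw [Real.rpow_one]]
    rw [← Real.rpow_add hχ0]
    congr 1
    field_simp
    ring
  have hyt : y ^ (-t) = X := by
    rw [hy, hX, ← Real.rpow_mul hχ0.le]
    congr 1
    field_simp
  -- Part 1
  have hP1 : ∑ i ∈ Finset.range N, f i ≤ 2 * (A ^ 2 * X) := by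
    have hgs : ∑ i ∈ Finset.range N, (2:ℝ) ^ i = 2 ^ N - 1 := by
      rw [geom_sum_eq (by norm_num)]
      norm_num
    calc ∑ i ∈ Finset.range N, f i ≤ ∑ i ∈ Finset.range N, 2 ^ i * (A ^ 2 * χ) :=
        Finset.sum_le_sum fun i _ => hfB i
      _ = (∑ i ∈ Finset.range N, (2:ℝ) ^ i) * (A ^ 2 * χ) := by rw [← Finset.sum_mul]
      _ ≤ (2:ℝ) ^ N * (A ^ 2 * χ) := by
        rw [hgs]; nlinarith [sq_nonneg A, mul_pos (pow_pos hA 2) hχ0]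
      _ ≤ 2 * y * (A ^ 2 * χ) := by
        have h := h2N_le
        rw [← Real.rpow_natCast (2:ℝ) N]
        nlinarith [mul_pos (pow_pos hA 2) hχ0]
      _ = 2 * (A ^ 2 * (y * χ)) := by ring
      _ = 2 * (A ^ 2 * X) := by rw [hyχ]
  -- Part 2
  have hrN : r ^ N ≤ X := by
    have h1 : r ^ N = ((2:ℝ) ^ (N : ℝ)) ^ (-t) := by
      rw [hr, ← Real.rpow_natCast ((2:ℝ) ^ (-t)) N, ← Real.rpow_mul (by norm_num),
        ← Real.rpow_mul (by norm_num)]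
      ring_nf
    rw [h1, ← hyt]
    exact Real.rpow_le_rpow_of_nonpos hy0 h2N_ge (by linarith)
  have hP2 : ∑' i, f (i + N) ≤ A ^ 2 * X * (1 - r)⁻¹ := by
    have hg : Summable (fun i : ℕ => A ^ 2 * r ^ N * r ^ i) :=
      (summable_geometric_of_lt_one hr0.le hr1).mul_left _
    have htail : Summable (fun i : ℕ => f (i + N)) := (summable_nat_add_iff N).mpr hsum
    have h1 : ∑' i, f (i + N) ≤ ∑' i : ℕ, A ^ 2 * r ^ N * r ^ i := by
      refine Summable.tsum_le_tsum (fun i => ?_) htail hg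
      calc f (i + N) ≤ A ^ 2 * r ^ (i + N) := hfA _
        _ = A ^ 2 * r ^ N * r ^ i := by rw [pow_add]; ring
    have h2 : ∑' i : ℕ, A ^ 2 * r ^ N * r ^ i = A ^ 2 * r ^ N * (1 - r)⁻¹ := by
      rw [tsum_mul_left, tsum_geometric_of_lt_one hr0.le hr1]
    calc ∑' i, f (i + N) ≤ A ^ 2 * r ^ N * (1 - r)⁻¹ := by rw [← h2]; exact h1
      _ ≤ A ^ 2 * X * (1 - r)⁻¹ := by
        have := hrN
        have hXpos : (0:ℝ) ≤ X := (Real.rpow_pos_of_pos hχ0 _).le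
        gcongr
  have hsplit : ∑' j, f j = ∑ i ∈ Finset.range N, f i + ∑' i, f (i + N) :=
    (hsum.sum_add_tsum_nat_add N).symm
  calc ∑' j, f j = ∑ i ∈ Finset.range N, f i + ∑' i, f (i + N) := hsplit
    _ ≤ 2 * (A ^ 2 * X) + A ^ 2 * X * (1 - r)⁻¹ := add_le_add hP1 hP2
    _ = (2 + (1 - r)⁻¹) * A ^ 2 * X := by ring
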